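/- On the 2D torus (or any setting where P commutes with powers of −Δ), for a divergence-free ξ ∈ W^{k+3,∞} and f ∈ W^{k+3,2}, the commutator [Δ, B] := Δ B − B Δ with B = L_ξ + T_ξ is an operator of second order: ‖[Δ, B] f‖_{W^{k,2}} ≤ c ‖ξ‖_{W^{k+3,∞}} ‖f‖_{W^{k+2,2}}; i.e. the commutator loses one fewer derivative than the naive count. -/

import Mathlib

open MeasureTheory

noncomputable section

abbrev E2 : Type := EuclideanSpace ℝ (Fin 2)

/-- The `j`-th partial derivative of a vector field. -/
def pd (j : Fin 2) (f : E2 → E2) (x : E2) : E2 :=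
  fderiv ℝ f x (EuclideanSpace.single j 1)

/-- The componentwise Laplacian `Δ f = Σ_j ∂_j ∂_j f`. -/
def lap (f : E2 → E2) (x : E2) : E2 :=
  ∑ j : Fin 2, fderiv ℝ (fun y => pd j f y) x (EuclideanSpace.single j 1)

/-- The transport term `L_ξ f = Σ_j ξ^j ∂_j f`. -/
def Ladv (ξ f : E2 → E2) (x : E2) : E2 :=
  ∑ j : Fin 2, (ξ x j) • pd j f x

/-- The stretching term `T_ξ f = Σ_j f^j ∇ξ^j`. -/
def Tstr (ξ f : E2 → E2) (x : E2) : E2 :=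
  ∑ j : Fin 2, (f x j) • gradient (fun y => ξ y j) x

/-- The SALT operator `B f = L_ξ f + T_ξ f`. -/
def Bop (ξ f : E2 → E2) (x : E2) : E2 := Ladv ξ f x + Tstr ξ f x

/-- The commutator `[Δ, B] f = Δ(B f) − B(Δ f)`. -/
def commDB (ξ f : E2 → E2) (x : E2) : E2 :=
  lap (Bop ξ f) x - Bop ξ (fun y => lap f y) x

/-- The `W^{k,2}(O)` norm built from iterated derivatives. -/
def nHk (O : Set E2) (k : ℕ) (f : E2 → E2) : ℝ :=
  Real.sqrt (∑ i ∈ Finset.range (k + 1), ∫ x in O, ‖iteratedFDeriv ℝ i f x‖ ^ 2)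


/-! Expanding `Δ(ξ^j ∂_j f)` and `Δ(f^j ∇ξ^j)` by the Leibniz rule
`Δ(a v) = (Δa) v + 2 Σ_m ∂_m a ∂_m v + a Δv`, the terms `ξ^j Δ∂_j f` and `(Δf^j) ∇ξ^j`
are exactly `B(Δf)`, because `∂_j` commutes with `Δ`, and cancel. What remains of
`[Δ, B] f` involves at most two derivatives of `f` and three of `ξ`, so by the Leibniz bound
for iterated derivatives of products, its derivatives of order `≤ k` are pointwise bounded by a
multiple of `K` times the `(k+2)`-jet norm of `f`; squaring and integrating over `O` gives the
estimate. -/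

section Jet

variable {E F G : Type*} [NormedAddCommGroup E] [NormedSpace ℝ E]
  [NormedAddCommGroup F] [NormedSpace ℝ F] [NormedAddCommGroup G] [NormedSpace ℝ G]

def JetNormLE (n : ℕ) (g : E → F) (x : E) (A : ℝ) : Prop :=
  ContDiff ℝ n g ∧ ∀ p ≤ n, ‖iteratedFDeriv ℝ p g x‖ ≤ A

namespace JetNormLE

variable {n m : ℕ} {g h : E → F} {x : E} {A B : ℝ}

lemma nonneg (hg : JetNormLE n g x A) : 0 ≤ A :=
  (norm_nonneg _).trans (hg.2 0 n.zero_le)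

lemma mono (hg : JetNormLE n g x A) (hmn : m ≤ n) (hAB : A ≤ B) : JetNormLE m g x B :=
  ⟨hg.1.of_le (by exact_mod_cast hmn), fun p hp => (hg.2 p (hp.trans hmn)).trans hAB⟩

lemma contDiffAt (hg : JetNormLE n g x A) {p : ℕ} (hp : p ≤ n) (y : E) :
    ContDiffAt ℝ p g y :=
  (hg.1.of_le (by exact_mod_cast hp)).contDiffAt

lemma add (hg : JetNormLE n g x A) (hh : JetNormLE n h x B) :
    JetNormLE n (fun y => g y + h y) x (A + B) := by
  refine ⟨hg.1.add hh.1, fun p hp => ?_⟩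
  rw [fun_iteratedFDeriv_add_apply (hg.contDiffAt hp x) (hh.contDiffAt hp x)]
  exact (norm_add_le _ _).trans (add_le_add (hg.2 p hp) (hh.2 p hp))

lemma const_smul (c : ℝ) (hg : JetNormLE n g x A) :
    JetNormLE n (fun y => c • g y) x (‖c‖ * A) := by
  refine ⟨hg.1.const_smul c, fun p hp => ?_⟩
  rw [iteratedFDeriv_const_smul_apply' (hg.contDiffAt hp x), norm_smul]
  exact mul_le_mul_of_nonneg_left (hg.2 p hp) (norm_nonneg c)

lemma sum {ι : Type*} {s : Finset ι} {g : ι → E → F} {A : ι → ℝ}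
    (hg : ∀ i ∈ s, JetNormLE n (g i) x (A i)) :
    JetNormLE n (fun y => ∑ i ∈ s, g i y) x (∑ i ∈ s, A i) := by
  refine ⟨ContDiff.sum fun i hi => (hg i hi).1, fun p hp => ?_⟩
  rw [iteratedFDeriv_fun_sum_apply fun i hi => (hg i hi).contDiffAt hp x]
  exact (norm_sum_le _ _).trans (Finset.sum_le_sum fun i hi => (hg i hi).2 p hp)

lemma smul {a : E → ℝ} {v : E → F} (ha : JetNormLE n a x A) (hv : JetNormLE n v x B) :
    JetNormLE n (fun y => a y • v y) x (2 ^ n * (A * B)) := by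
  refine ⟨ha.1.smul hv.1, fun p hp => ?_⟩
  have hAB : 0 ≤ A * B := mul_nonneg ha.nonneg hv.nonneg
  calc ‖iteratedFDeriv ℝ p (fun y => a y • v y) x‖
      ≤ ∑ i ∈ Finset.range (p + 1), (p.choose i : ℝ) *
          ‖iteratedFDeriv ℝ i a x‖ * ‖iteratedFDeriv ℝ (p - i) v x‖ :=
        norm_iteratedFDeriv_smul_le ha.1 hv.1 x (by exact_mod_cast hp)
    _ ≤ ∑ i ∈ Finset.range (p + 1), (p.choose i : ℝ) * (A * B) := by
        refine Finset.sum_le_sum fun i hi => ?_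
        have hip : i ≤ p := Nat.lt_succ_iff.mp (Finset.mem_range.mp hi)
        rw [mul_assoc]
        refine mul_le_mul_of_nonneg_left ?_ (Nat.cast_nonneg _)
        exact mul_le_mul (ha.2 i (hip.trans hp)) (hv.2 _ ((p.sub_le i).trans hp))
          (norm_nonneg _) ha.nonneg
    _ = 2 ^ p * (A * B) := by
        rw [← Finset.sum_mul]
        exact_mod_cast congrArg (fun t : ℕ => (t : ℝ) * (A * B)) (Nat.sum_range_choose p)
    _ ≤ 2 ^ n * (A * B) := by gcongr; norm_num

lemma clm_comp (L : F →L[ℝ] G) (hL : ‖L‖ ≤ 1) (hg : JetNormLE n g x A) :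
    JetNormLE n (fun y => L (g y)) x A :=
  ⟨L.contDiff.comp hg.1, fun p hp =>
    (L.norm_iteratedFDeriv_comp_left (hg.contDiffAt hp x) le_rfl).trans
      ((mul_le_of_le_one_left (norm_nonneg _) hL).trans (hg.2 p hp))⟩

protected lemma fderiv (hg : JetNormLE (n + 1) g x A) : JetNormLE n (fderiv ℝ g) x A :=
  ⟨hg.1.fderiv_right (by push_cast; exact le_rfl), fun p hp => by
    rw [norm_iteratedFDeriv_fderiv]; exact hg.2 (p + 1) (by omega)⟩

lemma fderiv_apply (v : E) (hv : ‖v‖ ≤ 1) (hg : JetNormLE (n + 1) g x A) :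
    JetNormLE n (fun y => fderiv ℝ g y v) x A := by
  have hd := hg.fderiv
  refine ⟨hd.1.clm_apply contDiff_const, fun p hp => ?_⟩
  exact (norm_iteratedFDeriv_clm_apply_const (hd.contDiffAt hp x) le_rfl).trans
    ((mul_le_of_le_one_left (norm_nonneg _) hv).trans (hd.2 p hp))

end JetNormLE

end Jet

section Partial

variable {ι F G : Type*} [Fintype ι] [DecidableEq ι]
  [NormedAddCommGroup F] [NormedSpace ℝ F] [NormedAddCommGroup G] [NormedSpace ℝ G]

def partialDeriv (j : ι) (g : EuclideanSpace ℝ ι → F) (x : EuclideanSpace ℝ ι) : F :=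
  fderiv ℝ g x (EuclideanSpace.single j 1)

def coordLaplacian (g : EuclideanSpace ℝ ι → F) (x : EuclideanSpace ℝ ι) : F :=
  ∑ j, partialDeriv j (partialDeriv j g) x

variable {g h : EuclideanSpace ℝ ι → F} {x : EuclideanSpace ℝ ι}

lemma contDiff_partialDeriv {n m : WithTop ℕ∞} (hg : ContDiff ℝ n g) (hm : m + 1 ≤ n)
    (j : ι) : ContDiff ℝ m (partialDeriv j g) :=
  (hg.fderiv_right hm).clm_apply contDiff_const

lemma partialDeriv_add (hg : DifferentiableAt ℝ g x) (hh : DifferentiableAt ℝ h x) (j : ι) :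
    partialDeriv j (fun y => g y + h y) x = partialDeriv j g x + partialDeriv j h x := by
  simp [partialDeriv, fderiv_fun_add hg hh]

lemma partialDeriv_sum {κ : Type*} {s : Finset κ} {g : κ → EuclideanSpace ℝ ι → F}
    (hg : ∀ i ∈ s, DifferentiableAt ℝ (g i) x) (j : ι) :
    partialDeriv j (fun y => ∑ i ∈ s, g i y) x = ∑ i ∈ s, partialDeriv j (g i) x := by
  simp [partialDeriv, fderiv_fun_sum hg]

lemma partialDeriv_smul {a : EuclideanSpace ℝ ι → ℝ} (ha : DifferentiableAt ℝ a x)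
    (hg : DifferentiableAt ℝ g x) (j : ι) :
    partialDeriv j (fun y => a y • g y) x
      = partialDeriv j a x • g x + a x • partialDeriv j g x := by
  simp [partialDeriv, fderiv_fun_smul ha hg, add_comm]

lemma partialDeriv_clm_comp (L : F →L[ℝ] G) (hg : DifferentiableAt ℝ g x) (j : ι) :
    partialDeriv j (fun y => L (g y)) x = L (partialDeriv j g x) := by
  simp [partialDeriv, fderiv_fun_comp x L.differentiableAt hg]

lemma partialDeriv_comm (hg : ContDiffAt ℝ 2 g x) (i j : ι) :
    partialDeriv i (partialDeriv j g) x = partialDeriv j (partialDeriv i g) x := by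
  have hd : DifferentiableAt ℝ (fderiv ℝ g) x :=
    (hg.fderiv_right (m := 1) le_rfl).differentiableAt one_ne_zero
  have hsnd (u v : EuclideanSpace ℝ ι) :
      fderiv ℝ (fun y => fderiv ℝ g y v) x u = fderiv ℝ (fderiv ℝ g) x u v := by
    simp [fderiv_clm_apply hd (differentiableAt_const v)]
  change fderiv ℝ (fun y => fderiv ℝ g y _) x _ = fderiv ℝ (fun y => fderiv ℝ g y _) x _
  rw [hsnd, hsnd]
  exact hg.isSymmSndFDerivAt (by simp [minSmoothness_of_isRCLikeNormedField]) _ _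

lemma JetNormLE.partialDeriv {n : ℕ} {A : ℝ} (hg : JetNormLE (n + 1) g x A) (j : ι) :
    JetNormLE n (partialDeriv j g) x A :=
  hg.fderiv_apply _ (by simp)

lemma differentiable_partialDeriv (hg : ContDiff ℝ 2 g) (j : ι) :
    Differentiable ℝ (partialDeriv j g) :=
  (contDiff_partialDeriv hg (m := 1) (by norm_num) j).differentiable one_ne_zero

lemma coordLaplacian_add (hg : ContDiff ℝ 2 g) (hh : ContDiff ℝ 2 h) :
    coordLaplacian (fun y => g y + h y) x = coordLaplacian g x + coordLaplacian h x := by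
  have hj (j : ι) : partialDeriv j (fun y => g y + h y)
      = fun y => partialDeriv j g y + partialDeriv j h y :=
    funext fun y => partialDeriv_add (hg.differentiable two_ne_zero y)
      (hh.differentiable two_ne_zero y) j
  simp only [coordLaplacian, hj, ← Finset.sum_add_distrib,
    partialDeriv_add (differentiable_partialDeriv hg _ x) (differentiable_partialDeriv hh _ x)]

lemma coordLaplacian_sum {κ : Type*} {s : Finset κ} {g : κ → EuclideanSpace ℝ ι → F}
    (hg : ∀ i ∈ s, ContDiff ℝ 2 (g i)) :
    coordLaplacian (fun y => ∑ i ∈ s, g i y) x = ∑ i ∈ s, coordLaplacian (g i) x := by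
  have hj (j : ι) : partialDeriv j (fun y => ∑ i ∈ s, g i y)
      = fun y => ∑ i ∈ s, partialDeriv j (g i) y :=
    funext fun y => partialDeriv_sum (fun i hi => (hg i hi).differentiable two_ne_zero y) j
  simp only [coordLaplacian, hj,
    partialDeriv_sum fun i hi => differentiable_partialDeriv (hg i hi) _ x]
  exact Finset.sum_comm

lemma coordLaplacian_smul {a : EuclideanSpace ℝ ι → ℝ} (ha : ContDiff ℝ 2 a)
    (hg : ContDiff ℝ 2 g) :
    coordLaplacian (fun y => a y • g y) x = coordLaplacian a x • g x
      + (2 : ℝ) • ∑ j, partialDeriv j a x • partialDeriv j g x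
      + a x • coordLaplacian g x := by
  have hj (j : ι) : partialDeriv j (fun y => a y • g y)
      = fun y => partialDeriv j a y • g y + a y • partialDeriv j g y :=
    funext fun y => partialDeriv_smul (ha.differentiable two_ne_zero y)
      (hg.differentiable two_ne_zero y) j
  have hda := ha.differentiable two_ne_zero x
  have hdg := hg.differentiable two_ne_zero x
  have hdpa (j : ι) := differentiable_partialDeriv ha j x
  have hdpg (j : ι) := differentiable_partialDeriv hg j x
  simp only [coordLaplacian, hj]
  rw [Finset.sum_smul, Finset.smul_sum, Finset.smul_sum, ← Finset.sum_add_distrib,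
    ← Finset.sum_add_distrib]
  refine Finset.sum_congr rfl fun j _ => ?_
  rw [partialDeriv_add ((hdpa j).fun_smul hdg) (hda.fun_smul (hdpg j)),
    partialDeriv_smul (hdpa j) hdg, partialDeriv_smul hda (hdpg j), two_smul]
  abel

lemma partialDeriv_coordLaplacian (hg : ContDiff ℝ 3 g) (j : ι) :
    partialDeriv j (coordLaplacian g) x = coordLaplacian (partialDeriv j g) x := by
  have hpg (m : ι) : ContDiff ℝ 2 (partialDeriv m g) := contDiff_partialDeriv hg (by norm_num) m
  have hswap (m : ι) : partialDeriv j (partialDeriv m g) = partialDeriv m (partialDeriv j g) :=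
    funext fun y => partialDeriv_comm (hg.of_le (by norm_num)).contDiffAt j m
  change partialDeriv j (fun y => ∑ m, partialDeriv m (partialDeriv m g) y) x = _
  rw [partialDeriv_sum fun m _ => differentiable_partialDeriv (hpg m) m x]
  refine Finset.sum_congr rfl fun m _ => ?_
  rw [partialDeriv_comm (hpg m).contDiffAt, hswap]

lemma coordLaplacian_clm_comp (L : F →L[ℝ] G) (hg : ContDiff ℝ 2 g) :
    coordLaplacian (fun y => L (g y)) x = L (coordLaplacian g x) := by
  have hj (j : ι) : partialDeriv j (fun y => L (g y)) = fun y => L (partialDeriv j g y) :=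
    funext fun y => partialDeriv_clm_comp L (hg.differentiable two_ne_zero y) j
  simp only [coordLaplacian, hj, map_sum,
    partialDeriv_clm_comp L (differentiable_partialDeriv hg _ x)]

lemma JetNormLE.coordLaplacian {n : ℕ} {A : ℝ} (hg : JetNormLE (n + 2) g x A) :
    JetNormLE n (coordLaplacian g) x (Fintype.card ι * A) := by
  have h := JetNormLE.sum (s := Finset.univ) fun m _ => (hg.partialDeriv m).partialDeriv m
  rwa [Finset.sum_const, Finset.card_univ, nsmul_eq_mul] at h

end Partial

section Components

variable {ι κ : Type*} [Fintype ι] [Fintype κ]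
  {g : EuclideanSpace ℝ ι → EuclideanSpace ℝ κ} {x : EuclideanSpace ℝ ι}

lemma norm_euclideanSpace_proj_le (j : κ) :
    ‖EuclideanSpace.proj (𝕜 := ℝ) (ι := κ) j‖ ≤ 1 :=
  ContinuousLinearMap.opNorm_le_bound _ zero_le_one fun y => by
    simpa using PiLp.norm_apply_le y j

lemma ContDiff.euclidean_apply {n : WithTop ℕ∞} (hg : ContDiff ℝ n g) (j : κ) :
    ContDiff ℝ n (fun y => g y j) :=
  (EuclideanSpace.proj (𝕜 := ℝ) j).contDiff.comp hg

lemma JetNormLE.euclidean_apply {n : ℕ} {A : ℝ} (hg : JetNormLE n g x A) (j : κ) :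
    JetNormLE n (fun y => g y j) x A :=
  hg.clm_comp _ (norm_euclideanSpace_proj_le j)

lemma coordLaplacian_apply [DecidableEq ι] (hg : ContDiff ℝ 2 g) (j : κ) :
    coordLaplacian g x j = coordLaplacian (fun y => g y j) x :=
  (coordLaplacian_clm_comp (EuclideanSpace.proj j) hg).symm

end Components

section Gradient

variable {H : Type*} [NormedAddCommGroup H] [InnerProductSpace ℝ H] [CompleteSpace H]
  {g : H → ℝ}

lemma contDiff_gradient {n m : WithTop ℕ∞} (hg : ContDiff ℝ n g) (hm : m + 1 ≤ n) :
    ContDiff ℝ m (gradient g) :=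
  (InnerProductSpace.toDual ℝ H).symm.toLinearIsometry.toContinuousLinearMap.contDiff.comp
    (hg.fderiv_right hm)

lemma JetNormLE.gradient {n : ℕ} {x : H} {A : ℝ} (hg : JetNormLE (n + 1) g x A) :
    JetNormLE n (gradient g) x A :=
  hg.fderiv.clm_comp (InnerProductSpace.toDual ℝ H).symm.toLinearIsometry.toContinuousLinearMap
    (LinearIsometry.norm_toContinuousLinearMap_le _)

end Gradient

lemma lap_eq_coordLaplacian (f : E2 → E2) : lap f = coordLaplacian f := rfl

def commDBExpansion (ξ f : E2 → E2) (x : E2) : E2 :=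
  ∑ j : Fin 2, (coordLaplacian (fun y => ξ y j) x • partialDeriv j f x
    + (2 : ℝ) • ∑ m,
        partialDeriv m (fun y => ξ y j) x • partialDeriv m (partialDeriv j f) x
    + (2 : ℝ) • ∑ m,
        partialDeriv m (fun y => f y j) x • partialDeriv m (gradient fun y => ξ y j) x
    + f x j • coordLaplacian (gradient fun y => ξ y j) x)

lemma Bop_eq (ξ f : E2 → E2) : Bop ξ f = fun y =>
    ∑ j : Fin 2, (ξ y j • partialDeriv j f y + f y j • gradient (fun z => ξ z j) y) :=
  funext fun _ => Finset.sum_add_distrib.symm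

lemma commDB_eq_commDBExpansion {ξ f : E2 → E2} (hξ : ContDiff ℝ 3 ξ)
    (hf : ContDiff ℝ 3 f) :
    commDB ξ f = commDBExpansion ξ f := by
  funext x
  have hξj (j : Fin 2) : ContDiff ℝ 2 (fun y => ξ y j) :=
    (hξ.of_le (by norm_num)).euclidean_apply j
  have hfj (j : Fin 2) : ContDiff ℝ 2 (fun y => f y j) :=
    (hf.of_le (by norm_num)).euclidean_apply j
  have hpf (j : Fin 2) : ContDiff ℝ 2 (partialDeriv j f) :=
    contDiff_partialDeriv hf (by norm_num) j
  have hgrad (j : Fin 2) : ContDiff ℝ 2 (gradient fun y => ξ y j) :=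
    contDiff_gradient (hξ.euclidean_apply j) (by norm_num)
  have hΔB : lap (Bop ξ f) x = ∑ j : Fin 2,
      (coordLaplacian (fun y => ξ y j • partialDeriv j f y) x
        + coordLaplacian (fun y => f y j • gradient (fun z => ξ z j) y) x) := by
    rw [lap_eq_coordLaplacian, Bop_eq, coordLaplacian_sum fun j _ =>
      ((hξj j).fun_smul (hpf j)).add ((hfj j).fun_smul (hgrad j))]
    exact Finset.sum_congr rfl fun j _ =>
      coordLaplacian_add ((hξj j).fun_smul (hpf j)) ((hfj j).fun_smul (hgrad j))
  have hBΔ : Bop ξ (fun y => lap f y) x = ∑ j : Fin 2,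
      (ξ x j • coordLaplacian (partialDeriv j f) x
        + coordLaplacian (fun y => f y j) x • gradient (fun z => ξ z j) x) := by
    rw [Bop_eq]
    refine Finset.sum_congr rfl fun j _ => ?_
    rw [lap_eq_coordLaplacian, partialDeriv_coordLaplacian hf,
      coordLaplacian_apply (hf.of_le (by norm_num))]
  rw [commDB, hΔB, hBΔ, commDBExpansion, ← Finset.sum_sub_distrib]
  refine Finset.sum_congr rfl fun j _ => ?_
  rw [coordLaplacian_smul (hξj j) (hpf j), coordLaplacian_smul (hfj j) (hgrad j)]
  abel

lemma JetNormLE.commDBExpansion {k : ℕ} {ξ f : E2 → E2} {x : E2} {K M : ℝ}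
    (hξ : JetNormLE (k + 3) ξ x K) (hf : JetNormLE (k + 2) f x M) :
    JetNormLE k (commDBExpansion ξ f) x (24 * 2 ^ k * K * M) := by
  have hξj (j : Fin 2) := hξ.euclidean_apply j
  have hfj (j : Fin 2) := hf.euclidean_apply j
  have hgrad (j : Fin 2) := (hξj j).gradient
  have hΔξ (j : Fin 2) := ((hξj j).mono (by omega : k + 2 ≤ k + 3) le_rfl).coordLaplacian
  have hΔξ_df (j : Fin 2) := (hΔξ j).smul ((hf.partialDeriv j).mono (by omega) le_rfl)
  have hdξ_ddf (j : Fin 2) := JetNormLE.const_smul 2 <| JetNormLE.sum (s := .univ) fun m _ =>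
    (((hξj j).partialDeriv m).mono (by omega) le_rfl).smul ((hf.partialDeriv j).partialDeriv m)
  have hdf_dgrad (j : Fin 2) := JetNormLE.const_smul 2 <| JetNormLE.sum (s := .univ) fun m _ =>
    (((hfj j).partialDeriv m).mono (by omega : k ≤ k + 1) le_rfl).smul
      (((hgrad j).partialDeriv m).mono (by omega : k ≤ k + 1) le_rfl)
  have hf_Δgrad (j : Fin 2) := ((hfj j).mono (by omega) le_rfl).smul (hgrad j).coordLaplacian
  refine (JetNormLE.sum (s := .univ) fun j _ =>
    (((hΔξ_df j).add (hdξ_ddf j)).add (hdf_dgrad j)).add (hf_Δgrad j)).mono le_rfl (le_of_eq ?_)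
  simp only [Fintype.card_fin, Nat.cast_ofNat, Real.norm_ofNat, Finset.sum_const,
    Finset.card_univ, nsmul_eq_mul]
  ring

section JetNorm

variable {E F : Type*} [NormedAddCommGroup E] [NormedSpace ℝ E]
  [NormedAddCommGroup F] [NormedSpace ℝ F]

def jetNorm (N : ℕ) (f : E → F) (x : E) : ℝ :=
  √(∑ q ∈ Finset.range (N + 1), ‖iteratedFDeriv ℝ q f x‖ ^ 2)

lemma norm_iteratedFDeriv_le_jetNorm {N q : ℕ} (hq : q ≤ N) (f : E → F) (x : E) :
    ‖iteratedFDeriv ℝ q f x‖ ≤ jetNorm N f x :=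
  Real.le_sqrt_of_sq_le <| Finset.single_le_sum (f := fun q => ‖iteratedFDeriv ℝ q f x‖ ^ 2)
    (fun _ _ => sq_nonneg _) (Finset.mem_range.mpr (Nat.lt_succ_of_le hq))

lemma ContDiff.jetNormLE {N : ℕ} {f : E → F} (hf : ContDiff ℝ N f) (x : E) :
    JetNormLE N f x (jetNorm N f x) :=
  ⟨hf, fun _ hq => norm_iteratedFDeriv_le_jetNorm hq f x⟩

end JetNorm

lemma integral_norm_iteratedFDeriv_sq_le {O : Set E2} (hO : MeasurableSet O) {g f : E2 → E2}
    {i N : ℕ} {A : ℝ} (hg : Continuous (iteratedFDeriv ℝ i g))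
    (hf : ∀ q ≤ N, IntegrableOn (fun x => ‖iteratedFDeriv ℝ q f x‖ ^ 2) O)
    (hgf : ∀ x ∈ O, ‖iteratedFDeriv ℝ i g x‖ ≤ A * jetNorm N f x) :
    ∫ x in O, ‖iteratedFDeriv ℝ i g x‖ ^ 2
      ≤ A ^ 2 * ∑ q ∈ Finset.range (N + 1), ∫ x in O, ‖iteratedFDeriv ℝ q f x‖ ^ 2 := by
  have hf' (q : ℕ) (hq : q ∈ Finset.range (N + 1)) :=
    hf q (Nat.lt_succ_iff.mp (Finset.mem_range.mp hq))
  have hsq (x : E2) (hx : x ∈ O) : ‖iteratedFDeriv ℝ i g x‖ ^ 2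
      ≤ A ^ 2 * ∑ q ∈ Finset.range (N + 1), ‖iteratedFDeriv ℝ q f x‖ ^ 2 := by
    rw [← Real.sq_sqrt (Finset.sum_nonneg fun _ _ => sq_nonneg _), ← mul_pow]
    exact pow_le_pow_left₀ (norm_nonneg _) (hgf x hx) 2
  have hbound : IntegrableOn
      (fun x => A ^ 2 * ∑ q ∈ Finset.range (N + 1), ‖iteratedFDeriv ℝ q f x‖ ^ 2) O :=
    (integrable_finsetSum _ hf').const_mul _
  have hint : IntegrableOn (fun x => ‖iteratedFDeriv ℝ i g x‖ ^ 2) O :=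
    hbound.mono' (hg.norm.pow 2).aestronglyMeasurable <|
      (ae_restrict_iff' hO).mpr <| ae_of_all _ fun x hx => by
        rw [Real.norm_of_nonneg (sq_nonneg _)]; exact hsq x hx
  calc ∫ x in O, ‖iteratedFDeriv ℝ i g x‖ ^ 2
      ≤ ∫ x in O, A ^ 2 * ∑ q ∈ Finset.range (N + 1), ‖iteratedFDeriv ℝ q f x‖ ^ 2 :=
        setIntegral_mono_on hint hbound hO hsq
    _ = _ := by rw [integral_const_mul, integral_finsetSum _ hf']

lemma nHk_le_of_norm_le_jetNorm {O : Set E2} (hO : MeasurableSet O) {g f : E2 → E2}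
    {k N : ℕ} {A : ℝ} (hg : ContDiff ℝ k g)
    (hf : ∀ q ≤ N, IntegrableOn (fun x => ‖iteratedFDeriv ℝ q f x‖ ^ 2) O)
    (hgf : ∀ i ≤ k, ∀ x ∈ O, ‖iteratedFDeriv ℝ i g x‖ ≤ A * jetNorm N f x)
    (hA : 0 ≤ A) :
    nHk O k g ≤ √(k + 1) * A * nHk O N f := by
  set S := ∑ q ∈ Finset.range (N + 1), ∫ x in O, ‖iteratedFDeriv ℝ q f x‖ ^ 2
  have hS : 0 ≤ S := Finset.sum_nonneg fun _ _ =>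
    setIntegral_nonneg hO fun _ _ => sq_nonneg _
  have hsum : ∑ i ∈ Finset.range (k + 1), ∫ x in O, ‖iteratedFDeriv ℝ i g x‖ ^ 2
      ≤ (√(k + 1) * A) ^ 2 * S := by
    calc _ ≤ ∑ _i ∈ Finset.range (k + 1), A ^ 2 * S := Finset.sum_le_sum fun i hi =>
          have hik := Nat.lt_succ_iff.mp (Finset.mem_range.mp hi)
          integral_norm_iteratedFDeriv_sq_le hO
            (hg.continuous_iteratedFDeriv (by exact_mod_cast hik)) hf (hgf i hik)
      _ = (√(k + 1) * A) ^ 2 * S := by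
        rw [Finset.sum_const, Finset.card_range, nsmul_eq_mul, mul_pow,
          Real.sq_sqrt (by positivity)]
        push_cast
        ring
  calc nHk O k g ≤ √((√(k + 1) * A) ^ 2 * S) := Real.sqrt_le_sqrt hsum
    _ = √(k + 1) * A * nHk O N f := by
      rw [Real.sqrt_mul (sq_nonneg _), Real.sqrt_sq (by positivity), nHk]

theorem stmt15_general (O : Set E2) (hO : IsOpen O) (k : ℕ) :
    ∃ c : ℝ, ∀ (ξ f : E2 → E2) (K : ℝ),
      ContDiff ℝ (k + 3) ξ → ContDiff ℝ (k + 3) f →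
      -- ξ divergence-free
      (∀ x ∈ O, ∑ j : Fin 2, pd j ξ x j = 0) →
      -- ‖ξ‖_{W^{k+3,∞}} ≤ K
      (∀ i : ℕ, i ≤ k + 3 → ∀ x ∈ O, ‖iteratedFDeriv ℝ i ξ x‖ ≤ K) →
      -- f ∈ W^{k+2,2}(O)
      (∀ i : ℕ, i ≤ k + 2 → IntegrableOn (fun x => ‖iteratedFDeriv ℝ i f x‖ ^ 2) O) →
      nHk O k (commDB ξ f) ≤ c * K * nHk O (k + 2) f := by
  refine ⟨24 * 2 ^ k * √(k + 1), fun ξ f K hξ hf _ hK hInt => ?_⟩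
  -- `0 ≤ K` can only be read off at a point of `O`
  rcases O.eq_empty_or_nonempty with rfl | ⟨x₀, hx₀⟩
  · simp [nHk]
  have hK0 : 0 ≤ K := (norm_nonneg _).trans (hK 0 (Nat.zero_le _) x₀ hx₀)
  have hξ' : ContDiff ℝ (k + 3 : ℕ) ξ := by exact_mod_cast hξ
  have hf' : ContDiff ℝ (k + 2 : ℕ) f := hf.of_le (by norm_cast; omega)
  have hjet (x : E2) (hx : x ∈ O) :
      JetNormLE k (commDBExpansion ξ f) x (24 * 2 ^ k * K * jetNorm (k + 2) f x) :=
    JetNormLE.commDBExpansion ⟨hξ', fun i hi => hK i hi x hx⟩ (hf'.jetNormLE x)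
  rw [commDB_eq_commDBExpansion (hξ.of_le (by norm_cast; omega)) (hf.of_le (by norm_cast; omega))]
  calc nHk O k (commDBExpansion ξ f) ≤ √(k + 1) * (24 * 2 ^ k * K) * nHk O (k + 2) f :=
        nHk_le_of_norm_le_jetNorm hO.measurableSet (hjet x₀ hx₀).1 hInt
          (fun i hi x hx => (hjet x hx).2 i hi) (by positivity)
    _ = 24 * 2 ^ k * √(k + 1) * K * nHk O (k + 2) f := by ring

/-- The commutator `[Δ, B]` is of second order:
`‖[Δ,B] f‖_{W^{k,2}} ≤ c ‖ξ‖_{W^{k+3,∞}} ‖f‖_{W^{k+2,2}}` — one derivative fewer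
than the naive count, since the third-order terms in `ΔB` and `BΔ` cancel. -/
theorem stmt15 (O : Set E2) (hO : IsOpen O) (hOb : Bornology.IsBounded O) (k : ℕ) :
    ∃ c : ℝ, ∀ (ξ f : E2 → E2) (K : ℝ),
      ContDiff ℝ (k + 3) ξ → ContDiff ℝ (k + 3) f →
      -- ξ divergence-free
      (∀ x ∈ O, ∑ j : Fin 2, pd j ξ x j = 0) →
      -- ‖ξ‖_{W^{k+3,∞}} ≤ K
      (∀ i : ℕ, i ≤ k + 3 → ∀ x ∈ O, ‖iteratedFDeriv ℝ i ξ x‖ ≤ K) →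
      -- f ∈ W^{k+2,2}(O)
      (∀ i : ℕ, i ≤ k + 2 → IntegrableOn (fun x => ‖iteratedFDeriv ℝ i f x‖ ^ 2) O) →
      nHk O k (commDB ξ f) ≤ c * K * nHk O (k + 2) f :=
  stmt15_general O hO k
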